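/- Let G be a connected graph and P, P', Q, Q' robust profiles in G. If (A,B) distinguishes P and P' efficiently, (C,D) distinguishes Q and Q' efficiently, and |(A,B)| < |(C,D)|, then some corner separation of (A,B) and (C,D) distinguishes Q and Q' efficiently. -/

import Mathlib

/-!
Orient `t ∈ Q`, `t⁻¹ ∈ Q'`. Since `|s| < |t|` and `t` is efficient, `s` points the same way
in `Q` and `Q'`, say `s ∈ Q ∩ Q'`; and say `s⁻¹ ∈ P`, `s ∈ P'`. If both corners `s ∨ t` and
`s ∨ t⁻¹` had order `> |t|`, submodularity would give the opposite corners `s⁻¹ ∨ t⁻¹` and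
`s⁻¹ ∨ t` order `< |s|`, so by robustness of `P` one of them would lie in `P`; lying above
`s⁻¹`, it would then distinguish `P` and `P'` more efficiently than `s`, or contradict the
consistency of `P'`. So one of these corners has order `≤ |t|`; it lies in `Q` by the profile
property, and consistency of `Q'` with `t⁻¹ ∈ Q'` makes it distinguish `Q` and `Q'`.
-/

/-- A separation of a graph `G`: a pair of vertex sets covering `V` with no edge
between `A ∖ B` and `B ∖ A`. -/
structure GraphSep {V : Type} (G : SimpleGraph V) where
  A : Set V
  B : Set V
  union_eq : A ∪ B = Set.univ
  no_edge : ∀ a ∈ A \ B, ∀ b ∈ B \ A, ¬ G.Adj a b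

namespace GraphSep

variable {V V' : Type} {G : SimpleGraph V} {G' : SimpleGraph V'}

/-- The inverse `(B,A)` of a separation `(A,B)`. -/
def inv (s : GraphSep G) : GraphSep G where
  A := s.B
  B := s.A
  union_eq := by rw [Set.union_comm]; exact s.union_eq
  no_edge := fun a ha b hb h => s.no_edge b hb a ha h.symm

/-- The separator `A ∩ B`. -/
def sepSet (s : GraphSep G) : Set V := s.A ∩ s.B

/-- The order `|A ∩ B|` of a separation, as an extended natural number. -/
noncomputable def order (s : GraphSep G) : ℕ∞ := (s.A ∩ s.B).encard

/-- `(A,B) ≤ (C,D)` iff `A ⊆ C` and `D ⊆ B`. -/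
protected def le (s t : GraphSep G) : Prop := s.A ⊆ t.A ∧ t.B ⊆ s.B

/-- Two separations are nested if after possibly replacing either by its inverse
they are `≤`-comparable. -/
def Nested (s t : GraphSep G) : Prop :=
  s.le t ∨ s.le t.inv ∨ s.inv.le t ∨ s.inv.le t.inv

lemma mem_A_or_B (s : GraphSep G) (x : V) : x ∈ s.A ∨ x ∈ s.B := by
  have h : x ∈ s.A ∪ s.B := by rw [s.union_eq]; exact Set.mem_univ x
  exact (Set.mem_union _ _ _).1 h

/-- The join `(A,B) ∨ (C,D) = (A ∪ C, B ∩ D)`. -/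
def join (s t : GraphSep G) : GraphSep G where
  A := s.A ∪ t.A
  B := s.B ∩ t.B
  union_eq := by
    apply Set.eq_univ_of_forall
    intro x
    rcases s.mem_A_or_B x with h1 | h1
    · exact Or.inl (Or.inl h1)
    · rcases t.mem_A_or_B x with h2 | h2
      · exact Or.inl (Or.inr h2)
      · exact Or.inr ⟨h1, h2⟩
  no_edge := by
    rintro a ⟨haA, haB⟩ b ⟨hbB, hbA⟩ hadj
    by_cases hsB : a ∈ s.B
    · have hatB : a ∉ t.B := fun h => haB ⟨hsB, h⟩
      have hatA : a ∈ t.A := (t.mem_A_or_B a).resolve_right hatB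
      exact t.no_edge a ⟨hatA, hatB⟩ b ⟨hbB.2, fun h => hbA (Or.inr h)⟩ hadj
    · have hasA : a ∈ s.A := (s.mem_A_or_B a).resolve_right hsB
      exact s.no_edge a ⟨hasA, hsB⟩ b ⟨hbB.1, fun h => hbA (Or.inl h)⟩ hadj

/-- The image of a separation under a graph isomorphism. -/
def map (φ : G ≃g G') (s : GraphSep G) : GraphSep G' where
  A := ⇑φ '' s.A
  B := ⇑φ '' s.B
  union_eq := by
    apply Set.eq_univ_of_forall
    intro y
    rcases s.mem_A_or_B (φ.symm y) with h | h
    · exact Or.inl ⟨φ.symm y, h, φ.apply_symm_apply y⟩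
    · exact Or.inr ⟨φ.symm y, h, φ.apply_symm_apply y⟩
  no_edge := by
    rintro a ⟨⟨x, hxA, rfl⟩, haB⟩ b ⟨⟨y, hyB, rfl⟩, hbA⟩ hadj
    exact s.no_edge x ⟨hxA, fun h => haB ⟨x, h, rfl⟩⟩ y ⟨hyB, fun h => hbA ⟨y, h, rfl⟩⟩
      (φ.map_adj_iff.mp hadj)

/-- The neighbourhood of a set of vertices. -/
def nbhd (G : SimpleGraph V) (X : Set V) : Set V := {v | v ∉ X ∧ ∃ x ∈ X, G.Adj v x}

/-- `w` can be reached from `v` by a walk avoiding `X`. -/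
def AvoidReach (G : SimpleGraph V) (X : Set V) (v w : V) : Prop :=
  ∃ p : G.Walk v w, ∀ u ∈ p.support, u ∉ X

/-- `C` is a (connected) component of `G − X`. -/
def IsCompOf (G : SimpleGraph V) (X C : Set V) : Prop :=
  ∃ v, v ∉ X ∧ C = {w | AvoidReach G X v w}

/-- A separation `(A,B)` is tight if each of `A ∖ B` and `B ∖ A` contains a component
of `G − (A ∩ B)` whose neighbourhood is all of `A ∩ B`. -/
def IsTight (s : GraphSep G) : Prop :=
  (∃ C, IsCompOf G s.sepSet C ∧ nbhd G C = s.sepSet ∧ C ⊆ s.A \ s.B) ∧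
  (∃ C, IsCompOf G s.sepSet C ∧ nbhd G C = s.sepSet ∧ C ⊆ s.B \ s.A)

/-- An orientation of `S_k`: it contains only separations of order `< k`, contains
at least one of `s, s⁻¹` for every separation of order `< k`, and contains both only
if they coincide. -/
def IsOrientation (k : ℕ∞) (P : Set (GraphSep G)) : Prop :=
  (∀ s ∈ P, s.order < k) ∧
  (∀ s : GraphSep G, s.order < k → (s ∈ P ∨ s.inv ∈ P)) ∧
  (∀ s ∈ P, s.inv ∈ P → s.inv = s)

/-- Consistency: no two members `r, s` with distinct underlying separations satisfy
`r⁻¹ ≤ s`. -/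
def Consistent (P : Set (GraphSep G)) : Prop :=
  ∀ r ∈ P, ∀ s ∈ P, r.inv.le s → r = s ∨ r = s.inv

/-- A `k`-profile: a consistent orientation of `S_k` satisfying the profile property. -/
def IsProfile (k : ℕ∞) (P : Set (GraphSep G)) : Prop :=
  IsOrientation k P ∧ Consistent P ∧ ∀ s ∈ P, ∀ t ∈ P, (s.join t).inv ∉ P

/-- A profile in `G` is a `k`-profile for some `k ∈ ℕ ∪ {ℵ₀}`. -/
def IsProfileIn (G : SimpleGraph V) (P : Set (GraphSep G)) : Prop := ∃ k : ℕ∞, IsProfile k P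

/-- A profile is regular if it contains no separation of the form `(V, X)`. -/
def RegularP (P : Set (GraphSep G)) : Prop := ∀ s ∈ P, s.A ≠ Set.univ

/-- A profile is bounded if it is a `k`-profile for some finite `k` and is not a subset
of any `ℵ₀`-profile. -/
def BoundedP (P : Set (GraphSep G)) : Prop :=
  (∃ k : ℕ, IsProfile (k : ℕ∞) P) ∧ ∀ Q : Set (GraphSep G), IsProfile ⊤ Q → ¬ P ⊆ Q

/-- `s` distinguishes the profiles `P` and `P'`. -/
def Distinguishes (s : GraphSep G) (P P' : Set (GraphSep G)) : Prop :=
  (s ∈ P ∧ s.inv ∈ P') ∨ (s.inv ∈ P ∧ s ∈ P')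

/-- `s` distinguishes `P` and `P'` efficiently: it has minimum order among all
separations distinguishing `P` and `P'`. -/
def EffDist (s : GraphSep G) (P P' : Set (GraphSep G)) : Prop :=
  Distinguishes s P P' ∧ ∀ t : GraphSep G, Distinguishes t P P' → s.order ≤ t.order

/-- `P` and `P'` are distinguishable: some finite-order separation distinguishes them. -/
def Distinguishable (P P' : Set (GraphSep G)) : Prop :=
  ∃ s : GraphSep G, s.order < ⊤ ∧ Distinguishes s P P'

/-- Robustness of a profile. -/
def RobustP (P : Set (GraphSep G)) : Prop :=
  ∀ s ∈ P, ∀ t : GraphSep G, t.order < ⊤ →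
    (s.join t).order < s.order → (s.join t.inv).order < s.order →
    (s.join t ∈ P ∨ s.join t.inv ∈ P)

/-- A `k`-profile is principal if for every vertex set `X` with `|X| < k` it contains
`(V ∖ C, C ∪ X)` for some component `C` of `G − X`. -/
def PrincipalP (k : ℕ∞) (P : Set (GraphSep G)) : Prop :=
  ∀ X : Set V, X.encard < k →
    ∃ C, IsCompOf G X C ∧ ∃ s ∈ P, s.A = Cᶜ ∧ s.B = C ∪ X

/-- `c` is a corner separation of `s` and `t`. -/
def IsCornerSep (s t c : GraphSep G) : Prop :=
  ∃ s' ∈ ({s, s.inv} : Set (GraphSep G)), ∃ t' ∈ ({t, t.inv} : Set (GraphSep G)),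
    c = s'.join t' ∨ c = (s'.join t').inv

/-- The set `S ⊆ V ∖ {x,y}` separates `x` from `y` in `G`. -/
def SeparatesIn (G : SimpleGraph V) (x y : V) (S : Set V) : Prop :=
  x ∉ S ∧ y ∉ S ∧ ∀ p : G.Walk x y, ∃ u ∈ p.support, u ∈ S

/-- `S` is a `⊆`-minimal `x`–`y`-separator in `G`. -/
def MinSeparator (G : SimpleGraph V) (x y : V) (S : Set V) : Prop :=
  SeparatesIn G x y S ∧ ∀ S' ⊆ S, SeparatesIn G x y S' → S' = S

/-- The separation of `G` induced by an (oriented) edge of a tree-decomposition. -/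
def InducedSep {ι : Type} (T : SimpleGraph ι) (𝒱 : ι → Set V) (x : GraphSep G) : Prop :=
  ∃ t t' : ι, T.Adj t t' ∧
    x.A = (⋃ u ∈ {u : ι | ∃ p : T.Walk u t, Sym2.mk t t' ∉ p.edges}, 𝒱 u) ∧
    x.B = (⋃ u ∈ {u : ι | ∃ p : T.Walk u t', Sym2.mk t t' ∉ p.edges}, 𝒱 u)

/-- Opposite pairs of corner separations of `s` and `t`. -/
def OppPair (s t c d : GraphSep G) : Prop :=
  (c = s.join t ∧ d = s.inv.join t.inv) ∨ (c = s.inv.join t.inv ∧ d = s.join t) ∨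
  (c = s.join t.inv ∧ d = s.inv.join t) ∨ (c = s.inv.join t ∧ d = s.join t.inv)

end GraphSep

lemma ENat.lt_of_add_le_add_of_lt {a b c d : ℕ∞} (h : a + b ≤ c + d) (hda : d < a)
    (hc : c ≠ ⊤) : b < c := by
  lift c to ℕ using hc
  lift d to ℕ using hda.ne_top
  induction a using ENat.recTopCoe with
  | top => simp at h
  | coe a =>
    induction b using ENat.recTopCoe with
    | top => simp at h
    | coe b => norm_cast at h hda ⊢; omega

namespace GraphSep

variable {V : Type} {G : SimpleGraph V}

@[simp]
lemma inv_inv (s : GraphSep G) : s.inv.inv = s := rfl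

@[simp]
lemma order_inv (s : GraphSep G) : s.inv.order = s.order := by
  simp only [order, inv, Set.inter_comm]

lemma le_join_left (s t : GraphSep G) : s.le (s.join t) :=
  ⟨Set.subset_union_left, Set.inter_subset_left⟩

lemma le_join_right (s t : GraphSep G) : t.le (s.join t) :=
  ⟨Set.subset_union_right, Set.inter_subset_right⟩

lemma order_join_add_order_inv_join_inv_le (s t : GraphSep G) :
    (s.join t).order + (s.inv.join t.inv).order ≤ s.order + t.order := by
  show ((s.A ∪ t.A) ∩ (s.B ∩ t.B)).encard + ((s.B ∪ t.B) ∩ (s.A ∩ t.A)).encard ≤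
    (s.A ∩ s.B).encard + (t.A ∩ t.B).encard
  set U := (s.A ∪ t.A) ∩ (s.B ∩ t.B)
  set W := (s.B ∪ t.B) ∩ (s.A ∩ t.A)
  have hunion : U ∪ W ⊆ (s.A ∩ s.B) ∪ (t.A ∩ t.B) := by
    rintro x (⟨hA | hC, hB, hD⟩ | ⟨hB | hD, hA, hC⟩)
    · exact Or.inl ⟨hA, hB⟩
    · exact Or.inr ⟨hC, hD⟩
    · exact Or.inl ⟨hA, hB⟩
    · exact Or.inr ⟨hC, hD⟩
  have hinter : U ∩ W ⊆ (s.A ∩ s.B) ∩ (t.A ∩ t.B) := by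
    rintro x ⟨⟨_, hB, hD⟩, _, hA, hC⟩
    exact ⟨⟨hA, hB⟩, hC, hD⟩
  calc U.encard + W.encard = (U ∪ W).encard + (U ∩ W).encard :=
        (Set.encard_union_add_encard_inter U W).symm
    _ ≤ ((s.A ∩ s.B) ∪ (t.A ∩ t.B)).encard + ((s.A ∩ s.B) ∩ (t.A ∩ t.B)).encard :=
        add_le_add (Set.encard_mono hunion) (Set.encard_mono hinter)
    _ = s.order + t.order := Set.encard_union_add_encard_inter _ _

lemma Distinguishes.symm {c : GraphSep G} {Q Q' : Set (GraphSep G)}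
    (h : Distinguishes c Q Q') : Distinguishes c Q' Q :=
  h.elim (fun ⟨h, h'⟩ => Or.inr ⟨h', h⟩) (fun ⟨h, h'⟩ => Or.inl ⟨h', h⟩)

lemma Distinguishes.inv {c : GraphSep G} {Q Q' : Set (GraphSep G)}
    (h : Distinguishes c Q Q') : Distinguishes c.inv Q Q' :=
  h.elim Or.inr Or.inl

lemma EffDist.symm {c : GraphSep G} {Q Q' : Set (GraphSep G)} (h : EffDist c Q Q') :
    EffDist c Q' Q :=
  ⟨h.1.symm, fun d hd => h.2 d hd.symm⟩

lemma EffDist.inv {c : GraphSep G} {Q Q' : Set (GraphSep G)} (h : EffDist c Q Q') :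
    EffDist c.inv Q Q' :=
  ⟨h.1.inv, fun d hd => (order_inv c).trans_le (h.2 d hd)⟩

lemma IsCornerSep.of_inv_left {s t c : GraphSep G} (h : IsCornerSep s.inv t c) :
    IsCornerSep s t c := by
  obtain ⟨s', hs', t', ht', hc⟩ := h
  exact ⟨s', hs'.symm, t', ht', hc⟩

lemma mem_and_mem_or_inv_mem_and_inv_mem {s : GraphSep G} {Q Q' : Set (GraphSep G)}
    {k k' : ℕ∞} (hQ : IsOrientation k Q) (hQ' : IsOrientation k' Q') (hk : s.order < k)
    (hk' : s.order < k') (hs : ¬ Distinguishes s Q Q') :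
    (s ∈ Q ∧ s ∈ Q') ∨ (s.inv ∈ Q ∧ s.inv ∈ Q') := by
  unfold Distinguishes at hs
  rcases hQ.2.1 s hk with h | h <;> rcases hQ'.2.1 s hk' with h' | h' <;> tauto

lemma EffDist.order_le_of_inv_le {s f : GraphSep G} {R R' : Set (GraphSep G)} {k : ℕ∞}
    (hR' : IsProfile k R') (hs : EffDist s R R') (hsR' : s ∈ R') (hfR : f ∈ R)
    (hle : s.inv.le f) : s.order ≤ f.order := by
  by_contra! hlt
  rcases hR'.1.2.1 f (hlt.trans (hR'.1.1 s hsR')) with hfR' | hfR'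
  · rcases hR'.2.1 s hsR' f hfR' hle with rfl | rfl
    · exact hlt.false
    · exact (order_inv f ▸ hlt).false
  · exact (hs.2 f (Or.inl ⟨hfR, hfR'⟩)).not_gt hlt

lemma EffDist.order_join_le_or_order_join_inv_le {s t : GraphSep G} {R R' : Set (GraphSep G)}
    {k : ℕ∞} (hR : RobustP R) (hR' : IsProfile k R') (hs : EffDist s R R') (hsR : s.inv ∈ R)
    (hsR' : s ∈ R') (ht : t.order < ⊤) :
    (s.join t).order ≤ t.order ∨ (s.join t.inv).order ≤ t.order := by
  by_contra! hgt
  have hs_top : s.order ≠ ⊤ := ((hR'.1.1 s hsR').trans_le le_top).ne_top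
  have hsmall :
      (s.inv.join t).order < s.inv.order ∧ (s.inv.join t.inv).order < s.inv.order := by
    rw [order_inv]
    refine ⟨ENat.lt_of_add_le_add_of_lt ?_ hgt.2 hs_top,
      ENat.lt_of_add_le_add_of_lt (order_join_add_order_inv_join_inv_le s t) hgt.1 hs_top⟩
    simpa using order_join_add_order_inv_join_inv_le s t.inv
  have hle : ∀ u : GraphSep G, s.inv.join u ∈ R → s.order ≤ (s.inv.join u).order :=
    fun u hu => hs.order_le_of_inv_le hR' hsR' hu (le_join_left _ _)
  rcases hR s.inv hsR t ht hsmall.1 hsmall.2 with h | h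
  · exact (hle t h).not_gt (order_inv s ▸ hsmall.1)
  · exact (hle t.inv h).not_gt (order_inv s ▸ hsmall.2)

lemma effDist_join_of_order_le {u t : GraphSep G} {Q Q' : Set (GraphSep G)} {k k' : ℕ∞}
    (hQ : IsProfile k Q) (hQ' : IsProfile k' Q') (ht : EffDist t Q Q') (htQ : t ∈ Q)
    (htQ' : t.inv ∈ Q') (huQ : u ∈ Q) (hle : (u.join t).order ≤ t.order) :
    EffDist (u.join t) Q Q' := by
  refine ⟨?_, fun d hd => hle.trans (ht.2 d hd)⟩
  have hcQ : u.join t ∈ Q :=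
    (hQ.1.2.1 _ (hle.trans_lt (hQ.1.1 t htQ))).resolve_right (hQ.2.2 u huQ t htQ)
  have hk' : (u.join t).order < k' := hle.trans_lt (order_inv t ▸ hQ'.1.1 t.inv htQ')
  rcases hQ'.1.2.1 _ hk' with hcQ' | hcQ'
  · rcases hQ'.2.1 t.inv htQ' _ hcQ' (le_join_right u t) with h | h
    · exact Or.inr ⟨h ▸ htQ, hcQ'⟩
    · exact Or.inl ⟨hcQ, h ▸ htQ'⟩
  · exact Or.inl ⟨hcQ, hcQ'⟩

lemma exists_isCornerSep_effDist_of_mem {s t : GraphSep G} {Q Q' R R' : Set (GraphSep G)}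
    {kQ kQ' kR' : ℕ∞} (hQ : IsProfile kQ Q) (hQ' : IsProfile kQ' Q') (hR' : IsProfile kR' R')
    (hR : RobustP R) (hs : EffDist s R R') (hsR : s.inv ∈ R) (hsR' : s ∈ R')
    (ht : EffDist t Q Q') (htQ : t ∈ Q) (htQ' : t.inv ∈ Q') (hsQ : s ∈ Q) (hsQ' : s ∈ Q') :
    ∃ c : GraphSep G, IsCornerSep s t c ∧ EffDist c Q Q' := by
  rcases hs.order_join_le_or_order_join_inv_le hR hR' hsR hsR'
      ((hQ.1.1 t htQ).trans_le le_top) with h | h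
  · exact ⟨s.join t, ⟨s, .inl rfl, t, .inl rfl, .inl rfl⟩,
      effDist_join_of_order_le hQ hQ' ht htQ htQ' hsQ h⟩
  · exact ⟨s.join t.inv, ⟨s, .inl rfl, t.inv, .inr rfl, .inl rfl⟩,
      (effDist_join_of_order_le hQ' hQ ht.inv.symm htQ' htQ hsQ' (by simpa using h)).symm⟩

end GraphSep

open GraphSep in
theorem stmt11_general {V : Type} (G : SimpleGraph V)
    (P P' Q Q' : Set (GraphSep G))
    (hP : IsProfileIn G P) (hP' : IsProfileIn G P')
    (hQ : IsProfileIn G Q) (hQ' : IsProfileIn G Q')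
    (hPr : RobustP P) (hP'r : RobustP P')
    (s t : GraphSep G)
    (hs : EffDist s P P') (ht : EffDist t Q Q')
    (hlt : s.order < t.order) :
    ∃ c : GraphSep G, IsCornerSep s t c ∧ EffDist c Q Q' := by
  wlog htQ : t ∈ Q ∧ t.inv ∈ Q' generalizing Q Q'
  · obtain ⟨c, hc, hcQ⟩ := this Q' Q hQ' hQ ht.symm (ht.1.resolve_left htQ).symm
    exact ⟨c, hc, hcQ.symm⟩
  obtain ⟨kQ, hQ⟩ := hQ
  obtain ⟨kQ', hQ'⟩ := hQ'
  wlog hsQ : s ∈ Q ∧ s ∈ Q' generalizing s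
  · have hk : s.order < kQ := hlt.trans (hQ.1.1 t htQ.1)
    have hk' : s.order < kQ' := hlt.trans (order_inv t ▸ hQ'.1.1 t.inv htQ.2)
    have hsinvQ := (mem_and_mem_or_inv_mem_and_inv_mem hQ.1 hQ'.1 hk hk'
      fun hd => (ht.2 s hd).not_gt hlt).resolve_left hsQ
    obtain ⟨c, hc, hcQ⟩ := this s.inv hs.inv (order_inv s ▸ hlt) hsinvQ
    exact ⟨c, hc.of_inv_left, hcQ⟩
  wlog hsP : s.inv ∈ P ∧ s ∈ P' generalizing P P'
  · exact this P' P hP' hP hP'r hPr hs.symm (hs.1.resolve_right hsP).symm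
  obtain ⟨kP', hP'⟩ := hP'
  exact exists_isCornerSep_effDist_of_mem hQ hQ' hP' hPr hs hsP.1 hsP.2 ht htQ.1 htQ.2
    hsQ.1 hsQ.2

open GraphSep in
/-- if `(A,B)` efficiently distinguishes `P,P'`, `(C,D)` efficiently
distinguishes `Q,Q'` and `|(A,B)| < |(C,D)|`, then some corner separation of the two
efficiently distinguishes `Q` and `Q'`. -/
theorem stmt11 {V : Type} (G : SimpleGraph V) (hG : G.Connected)
    (P P' Q Q' : Set (GraphSep G))
    (hP : IsProfileIn G P) (hP' : IsProfileIn G P')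
    (hQ : IsProfileIn G Q) (hQ' : IsProfileIn G Q')
    (hPr : RobustP P) (hP'r : RobustP P') (hQr : RobustP Q) (hQ'r : RobustP Q')
    (s t : GraphSep G)
    (hs : EffDist s P P') (ht : EffDist t Q Q')
    (hlt : s.order < t.order) :
    ∃ c : GraphSep G, IsCornerSep s t c ∧ EffDist c Q Q' :=
  stmt11_general G P P' Q Q' hP hP' hQ hQ' hPr hP'r s t hs ht hlt
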